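/- Let G be any finite simple graph and W, W' distinct stable sets of G. If conv({ρ(W), ρ(W')}) is an edge of Stab(G), then the induced subgraph of G on W △ W' is connected. -/

import Mathlib

/-!
If the induced subgraph on `W △ W'` splits, let `A` be a union of some but not all of its
components. Flipping `A` in both sets gives stable sets `W △ A` and `W' △ A` whose indicator
vectors have the same sum as those of `W` and `W'`, so the midpoint of the edge lies in the open
segment between them. Extremality of the edge puts `ρ(W △ A)` on the edge; a 0/1 vector there is
an endpoint, which forces `A = ∅` or `A = W △ W'`.
-/

open Set

variable {V : Type*} [Fintype V]

/-- A stable (independent) set of a graph. -/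
def IsStable (G : SimpleGraph V) (W : Set V) : Prop := ∀ a ∈ W, ∀ b ∈ W, ¬ G.Adj a b

/-- The indicator vector of a subset. -/
noncomputable def rho (W : Set V) : V → ℝ := W.indicator 1

/-- The stable set polytope of a graph. -/
noncomputable def stabPolytope (G : SimpleGraph V) : Set (V → ℝ) :=
  convexHull ℝ {x | ∃ W : Set V, IsStable G W ∧ x = rho W}

/-- `conv {v, w}` is an edge (1-dimensional face) of the polytope `P`. -/
def IsEdgeOf (P : Set (V → ℝ)) (v w : V → ℝ) : Prop :=
  v ≠ w ∧ IsExtreme ℝ P (segment ℝ v w)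

/-- A graph is perfect if every induced subgraph has chromatic number equal to clique number. -/
def IsPerfect (G : SimpleGraph V) : Prop :=
  ∀ s : Set V, (G.induce s).chromaticNumber = ((G.induce s).cliqueNum : ℕ∞)

/-- The induced subgraph on `S` is a connected bipartite graph. -/
def ConnBipartiteIn (G : SimpleGraph V) (S : Set V) : Prop :=
  (G.induce S).Connected ∧ (G.induce S).Colorable 2

/-- The symmetric difference of two sets. -/
def sd (W W' : Set V) : Set V := (W \ W') ∪ (W' \ W)

open scoped symmDiff

theorem IsExtreme.mem_of_add_eq_add {𝕜 E : Type*} [Field 𝕜] [LinearOrder 𝕜]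
    [IsStrictOrderedRing 𝕜] [AddCommGroup E] [Module 𝕜 E] {A : Set E} {v w p q : E}
    (h : IsExtreme 𝕜 A (segment 𝕜 v w)) (hp : p ∈ A) (hq : q ∈ A) (hsum : p + q = v + w) :
    p ∈ segment 𝕜 v w := by
  refine h.left_mem_of_mem_openSegment hp hq (midpoint_mem_segment v w) ?_
  rw [midpoint_eq_smul_add, ← hsum, ← midpoint_eq_smul_add]
  exact midpoint_mem_openSegment p q

section

variable {α : Type*}

theorem SimpleGraph.exists_separated_subset_of_not_preconnected_induce {G : SimpleGraph α}
    {S : Set α} (h : ¬ (G.induce S).Preconnected) :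
    ∃ A ⊆ S, A.Nonempty ∧ A ≠ S ∧ ∀ a ∈ A, ∀ b ∈ S \ A, ¬ G.Adj a b := by
  obtain ⟨u, v, huv⟩ : ∃ u v, ¬ (G.induce S).Reachable u v := by
    simpa [SimpleGraph.Preconnected] using h
  set A := {x | ∃ hx : x ∈ S, (G.induce S).Reachable u ⟨x, hx⟩}
  refine ⟨A, fun x hx => hx.1, ⟨u, u.2, .rfl⟩, fun hAS => ?_, ?_⟩
  · obtain ⟨_, hv⟩ : (v : α) ∈ A := by rw [hAS]; exact v.2
    exact huv hv
  · rintro a ⟨ha, hua⟩ b ⟨hb, hbA⟩ hab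
    exact hbA ⟨hb, hua.trans (SimpleGraph.Adj.reachable (G := G.induce S) hab)⟩

theorem sd_eq_symmDiff (W W' : Set α) : sd W W' = W ∆ W' := rfl

theorem rho_injective : Function.Injective (rho : Set α → α → ℝ) :=
  fun _ _ => Set.indicator_one_inj ℝ

theorem rho_add_rho_symmDiff {W W' A : Set α} (hA : A ⊆ W ∆ W') :
    rho W + rho W' = rho (W ∆ A) + rho (W' ∆ A) := by
  ext x
  have hx := @hA x
  by_cases hxA : x ∈ A <;> by_cases hW : x ∈ W <;> by_cases hW' : x ∈ W' <;>
    simp_all [rho, Set.mem_symmDiff]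

theorem eq_or_eq_of_rho_mem_segment {U W W' : Set α} (hne : W ≠ W')
    (h : rho U ∈ segment ℝ (rho W) (rho W')) : U = W ∨ U = W' := by
  wlog hx : ∃ x ∈ W, x ∉ W' generalizing W W'
  · have hx' : ∃ x ∈ W', x ∉ W := by
      push Not at hx
      by_contra! h'
      exact hne (Set.Subset.antisymm hx h')
    exact (this hne.symm (segment_symm ℝ (rho W) (rho W') ▸ h) hx').symm
  obtain ⟨x, hxW, hxW'⟩ := hx
  obtain ⟨a, b, -, -, hab, heq⟩ := h
  have hUx : rho U x = a := by simpa [rho, hxW, hxW'] using (congrFun heq x).symm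
  by_cases hxU : x ∈ U
  · obtain ⟨rfl, rfl⟩ : a = 1 ∧ b = 0 := by
      simp only [rho, Set.indicator_of_mem hxU, Pi.one_apply] at hUx
      constructor <;> linarith
    exact Or.inl (rho_injective (by simpa using heq.symm))
  · obtain ⟨rfl, rfl⟩ : a = 0 ∧ b = 1 := by
      simp only [rho, Set.indicator_of_notMem hxU] at hUx
      constructor <;> linarith
    exact Or.inr (rho_injective (by simpa using heq.symm))

variable {G : SimpleGraph α}

theorem IsStable.symmDiff {W W' A : Set α} (hW : IsStable G W) (hW' : IsStable G W')
    (hA : A ⊆ W ∆ W') (hsep : ∀ a ∈ A, ∀ b ∈ W ∆ W' \ A, ¬ G.Adj a b) :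
    IsStable G (W ∆ A) := by
  have mem_of_notMem : ∀ x ∈ W ∆ A, x ∉ W → x ∈ A ∧ x ∈ W' := fun x hx hxW => by
    have hxA : x ∈ A := by simpa [Set.mem_symmDiff, hxW] using hx
    exact ⟨hxA, by simpa [Set.mem_symmDiff, hxW] using hA hxA⟩
  have cross : ∀ a ∈ W ∆ A, ∀ b ∈ W ∆ A, a ∈ W → b ∉ W → ¬ G.Adj a b := by
    intro a ha b hb haW hbW hab
    obtain ⟨hbA, hbW'⟩ := mem_of_notMem b hb hbW
    by_cases haW' : a ∈ W'
    · exact hW' a haW' b hbW' hab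
    · have haA : a ∉ A := by simpa [Set.mem_symmDiff, haW] using ha
      exact hsep b hbA a ⟨Or.inl ⟨haW, haW'⟩, haA⟩ hab.symm
  intro a ha b hb hab
  by_cases haW : a ∈ W <;> by_cases hbW : b ∈ W
  · exact hW a haW b hbW hab
  · exact cross a ha b hb haW hbW hab
  · exact cross b hb a ha hbW haW hab.symm
  · exact hW' a (mem_of_notMem a ha haW).2 b (mem_of_notMem b hb hbW).2 hab

theorem rho_mem_stabPolytope {W : Set α} (hW : IsStable G W) : rho W ∈ stabPolytope G :=
  subset_convexHull ℝ _ ⟨W, hW, rfl⟩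

end

theorem stable_edge_connected (G : SimpleGraph V) (W W' : Set V)
    (hW : IsStable G W) (hW' : IsStable G W') (hne : W ≠ W')
    (hedge : IsEdgeOf (stabPolytope G) (rho W) (rho W')) :
    (G.induce (sd W W')).Connected := by
  rw [sd_eq_symmDiff]
  have hS : (W ∆ W').Nonempty := Set.nonempty_iff_ne_empty.2 (symmDiff_eq_bot.not.2 hne)
  refine (SimpleGraph.connected_iff _).2 ⟨by_contra fun hpc => ?_, hS.to_subtype⟩
  obtain ⟨A, hAsub, hAnonempty, hAproper, hsep⟩ :=
    SimpleGraph.exists_separated_subset_of_not_preconnected_induce hpc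
  have hmem : rho (W ∆ A) ∈ segment ℝ (rho W) (rho W') :=
    hedge.2.mem_of_add_eq_add (rho_mem_stabPolytope (hW.symmDiff hW' hAsub hsep))
      (rho_mem_stabPolytope (hW'.symmDiff hW (symmDiff_comm W W' ▸ hAsub)
        (symmDiff_comm W W' ▸ hsep)))
      (rho_add_rho_symmDiff hAsub).symm
  rcases eq_or_eq_of_rho_mem_segment hne hmem with h | h
  · exact hAnonempty.ne_empty (symmDiff_eq_left.1 h)
  · exact hAproper (symmDiff_right_inj.1 (h.trans (symmDiff_symmDiff_cancel_left ..).symm))
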